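/- arXiv:2303.00980 — 3 statements merged into one kernel-verified Lean document; each statement's English description precedes it below -/
import Mathlib

section
/- Let S ∈ ℝ^{n×m} be a selection matrix, E = [I_n; Sᵀ] ∈ ℝ^{(n+m)×n}, and D = I_n + diag(S·1_m) (which is invertible). Then for every weight matrix W ∈ ℝ^{p×n} and every input x ∈ ℝⁿ, (W D⁻¹ Eᵀ)(E x) = W x. That is, Net2Net width expansion is function preserving: if the input to a layer is expanded by duplicating coordinates according to E, and the incoming weights of each original unit are divided by its multiplicity (via D⁻¹) before copying columns (via Eᵀ), then the layer's output is unchanged. -/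
/-!
The columns of a selection matrix `S` are standard basis vectors, so distinct rows of `S` have
disjoint supports and `S Sᵀ` is the diagonal matrix of row sums (the multiplicities). Hence
`Eᵀ E = I + S Sᵀ = D`, which is invertible because its diagonal is at least `1`, and `D⁻¹ Eᵀ` is a
left inverse of `E`.
-/

open Matrix

namespace Matrix

variable {ι κ R : Type*} [DecidableEq ι]

theorem mul_transpose_eq_diagonal_of_selection [Fintype κ] [NonAssocSemiring R]
    {S : Matrix ι κ R} {σ : κ → ι} (hσ : ∀ i k, S i k = if i = σ k then 1 else 0) :
    S * Sᵀ = diagonal fun i => ∑ k, S i k := by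
  ext i j
  simp only [mul_apply, transpose_apply, diagonal_apply, hσ]
  split_ifs with hij
  · subst hij
    refine Finset.sum_congr rfl fun k _ => ?_
    split_ifs <;> simp
  · refine Finset.sum_eq_zero fun k _ => ?_
    split_ifs <;> simp_all

-- Without both ascriptions `*` is elaborated with the `CStarMatrix` instance and `rw` fails.
theorem transpose_fromRows_one_mul_fromRows_one [Fintype ι] [Fintype κ] [Semiring R]
    (S : Matrix ι κ R) :
    (fromRows (1 : Matrix ι ι R) Sᵀ)ᵀ * fromRows (1 : Matrix ι ι R) Sᵀ = 1 + S * Sᵀ := by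
  rw [transpose_fromRows, fromCols_mul_fromRows, transpose_one, Matrix.one_mul,
    transpose_transpose]

theorem isUnit_det_one_add_diagonal [Fintype ι] [Field R] [LinearOrder R] [IsStrictOrderedRing R]
    {d : ι → R} (hd : 0 ≤ d) : IsUnit (1 + diagonal d).det := by
  rw [← diagonal_one, diagonal_add, det_diagonal, isUnit_iff_ne_zero]
  exact Finset.prod_ne_zero_iff.mpr fun i _ => (add_pos_of_pos_of_nonneg one_pos (hd i)).ne'

end Matrix

/-- Net2Net width expansion is function preserving: `(W D⁻¹ Eᵀ) (E x) = W x`. -/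
theorem stmt_6 (n m p : ℕ) (S : Matrix (Fin n) (Fin m) ℝ)
    (hS : ∃ σ : Fin m → Fin n, ∀ i k, S i k = if i = σ k then 1 else 0)
    (E : Matrix (Fin n ⊕ Fin m) (Fin n) ℝ) (hE : E = Matrix.fromRows 1 Sᵀ)
    (Dm : Matrix (Fin n) (Fin n) ℝ)
    (hDm : Dm = 1 + Matrix.diagonal (fun i => ∑ k : Fin m, S i k)) :
    ∀ (W : Matrix (Fin p) (Fin n) ℝ) (x : Fin n → ℝ),
      (W * Dm⁻¹ * Eᵀ).mulVec (E.mulVec x) = W.mulVec x := by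
  intro W x
  obtain ⟨σ, hσ⟩ := hS
  have hEE : Eᵀ * E = Dm := by
    rw [hE, hDm, transpose_fromRows_one_mul_fromRows_one,
      mul_transpose_eq_diagonal_of_selection hσ]
  have hDm_unit : IsUnit Dm.det := hDm ▸ isUnit_det_one_add_diagonal fun i =>
    Finset.sum_nonneg fun k _ => by rw [hσ]; split_ifs <;> norm_num
  rw [mulVec_mulVec, Matrix.mul_assoc, Matrix.mul_assoc, hEE, nonsing_inv_mul Dm hDm_unit,
    Matrix.mul_one]
end

section
/- Consider an L-layer multilayer perceptron with weights W_l ∈ ℝ^{d_l × d_{l−1}} for l = 1,…,L, an arbitrary activation function φ : ℝ → ℝ applied entrywise, and hidden states h_0 = x ∈ ℝ^{d_0}, h_l = φ(W_l h_{l−1}). For each l = 0,…,L let S_l ∈ ℝ^{d_l × m_l} be a selection matrix, E_l = [I_{d_l}; S_lᵀ] ∈ ℝ^{(d_l+m_l)×d_l}, and D_l = E_lᵀ E_l = I_{d_l} + diag(S_l·1_{m_l}) (invertible). Define the Net2Net-grown weights Ŵ_l = E_l W_l D_{l−1}⁻¹ E_{l−1}ᵀ and the grown network ĥ_0 = E_0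 x, ĥ_l = φ(Ŵ_l ĥ_{l−1}). Then ĥ_l = E_l h_l for all l = 0,…,L; in particular, if S_L has zero columns (no output expansion) the grown network computes exactly the same function as the original network. -/
open Matrix

lemma sel_mul_transpose {n m : ℕ} (S : Matrix (Fin n) (Fin m) ℝ)
    (σ : Fin m → Fin n) (hσ : ∀ i k, S i k = if i = σ k then 1 else 0) :
    S * Sᵀ = Matrix.diagonal (fun i => ∑ k : Fin m, S i k) := by
  ext i j
  simp only [Matrix.mul_apply, Matrix.transpose_apply, Matrix.diagonal_apply, hσ]
  by_cases hij : i = j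
  · subst hij
    rw [if_pos rfl]
    apply Finset.sum_congr rfl
    intro k _
    split <;> simp
  · simp only [hij, if_false]
    apply Finset.sum_eq_zero
    intro k _
    by_cases h1 : i = σ k
    · have : j ≠ σ k := fun h2 => hij (h1.trans h2.symm)
      simp [this]
    · simp [h1]

lemma E_mulVec {n m : ℕ} (S : Matrix (Fin n) (Fin m) ℝ)
    (σ : Fin m → Fin n) (hσ : ∀ i k, S i k = if i = σ k then 1 else 0) (v : Fin n → ℝ) :
    (Matrix.fromRows (1 : Matrix (Fin n) (Fin n) ℝ) Sᵀ).mulVec v = Sum.elim v (v ∘ σ) := by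
  rw [Matrix.fromRows_mulVec]
  ext i
  cases i with
  | inl i => simp
  | inr k =>
    simp only [Sum.elim_inr, Function.comp_apply, Matrix.mulVec, dotProduct,
      Matrix.transpose_apply, hσ]
    rw [Finset.sum_eq_single (σ k)] <;> simp +contextual [eq_comm]

/-- Net2Net growth of a multilayer perceptron is function preserving: the hidden states of
the grown network satisfy `ĥ l = E l (h l)` for all `l = 0, …, L`. -/
theorem stmt_7 (L : ℕ) (d m : ℕ → ℕ) (φ : ℝ → ℝ)
    (W : (l : ℕ) → Matrix (Fin (d (l + 1))) (Fin (d l)) ℝ)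
    (x : Fin (d 0) → ℝ)
    (h : (l : ℕ) → Fin (d l) → ℝ)
    (h0 : h 0 = x)
    (hstep : ∀ l, h (l + 1) = fun i => φ ((W l).mulVec (h l) i))
    (S : (l : ℕ) → Matrix (Fin (d l)) (Fin (m l)) ℝ)
    (hS : ∀ l, ∃ σ : Fin (m l) → Fin (d l), ∀ i k, S l i k = if i = σ k then 1 else 0)
    (E : (l : ℕ) → Matrix (Fin (d l) ⊕ Fin (m l)) (Fin (d l)) ℝ)
    (hE : ∀ l, E l = Matrix.fromRows 1 (S l)ᵀ)
    (Dm : (l : ℕ) → Matrix (Fin (d l)) (Fin (d l)) ℝ)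
    (hDm : ∀ l, Dm l = 1 + Matrix.diagonal (fun i => ∑ k : Fin (m l), S l i k))
    (What : (l : ℕ) → Matrix (Fin (d (l + 1)) ⊕ Fin (m (l + 1))) (Fin (d l) ⊕ Fin (m l)) ℝ)
    (hWhat : ∀ l, What l = E (l + 1) * W l * (Dm l)⁻¹ * (E l)ᵀ)
    (hhat : (l : ℕ) → (Fin (d l) ⊕ Fin (m l)) → ℝ)
    (hhat0 : hhat 0 = (E 0).mulVec x)
    (hhatstep : ∀ l, hhat (l + 1) = fun i => φ ((What l).mulVec (hhat l) i)) :
    ∀ l ≤ L, hhat l = (E l).mulVec (h l) := by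
  -- Dm as a diagonal matrix
  have hDdiag : ∀ l, Dm l = Matrix.diagonal (fun i => 1 + ∑ k : Fin (m l), S l i k) := by
    intro l
    rw [hDm l, ← Matrix.diagonal_one, ← Matrix.diagonal_add]
  -- EᵀE = Dm
  have hEE : ∀ l, (E l)ᵀ * E l = Dm l := by
    intro l
    obtain ⟨σ, hσ⟩ := hS l
    rw [hE l, Matrix.transpose_fromRows, Matrix.fromCols_mul_fromRows, hDm l]
    simp [Matrix.transpose_transpose, sel_mul_transpose (S l) σ hσ]
  -- Dm l is invertible
  have hDinv : ∀ l, (Dm l)⁻¹ * Dm l = 1 := by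
    intro l
    apply Matrix.nonsing_inv_mul
    rw [hDdiag l, Matrix.det_diagonal]
    apply isUnit_iff_ne_zero.mpr
    apply Finset.prod_ne_zero_iff.mpr
    intro i _
    have hnn : (0:ℝ) ≤ ∑ k : Fin (m l), S l i k := by
      obtain ⟨σ, hσ⟩ := hS l
      apply Finset.sum_nonneg
      intro k _
      rw [hσ]
      split <;> norm_num
    positivity
  -- main induction
  intro l _
  induction l with
  | zero => rw [hhat0, h0]
  | succ n ih =>
    have ihn := ih (Nat.le_of_succ_le (by omega))
    obtain ⟨σ, hσ⟩ := hS n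
    obtain ⟨τ, hτ⟩ := hS (n + 1)
    have key : What n * E n = E (n + 1) * W n := by
      rw [hWhat n, Matrix.mul_assoc, hEE n, Matrix.mul_assoc, hDinv n, Matrix.mul_one]
    rw [hhatstep n, hstep n, ihn, Matrix.mulVec_mulVec, key, ← Matrix.mulVec_mulVec]
    rw [hE (n+1), E_mulVec (S (n+1)) τ hτ, E_mulVec (S (n+1)) τ hτ]
    ext i
    cases i <;> simp
end

section
/- Let L1, L2, D1, D2 be positive integers. Let ℓ : {1,…,L2}×{1,…,L1}×({1,…,D2}×{1,…,D2}) → ℝ, and let R_1,…,R_{L1} be matrices on ({1,…,D2}×{1,…,D2})×({1,…,D1}×{1,…,D1}). Define the LiGO matrix M = L_depth · R_width, where L_depth[(i,a),(j,b)] = ℓ(i,j,a) if a = b and 0 otherwise, and R_width is block diagonal with blocks R_1,…,R_{L1}. Then M admits a Monarch factorization: M = P_1 · diag(L^{(a)} : a ∈ {1,…,D2}×{1,…,D2}) · P_2ᵀ · R_width, where L^{(a)} ∈ ℝ^{L2×L1} is defined by L^{(a)}_{i,j} = ℓ(i,j,a), diag(L^{(a)}) denotes the block-diagonal matrix with these blocks,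 and P_1, P_2 are the permutation matrices realizing the index bijections (i,a) ↦ (a,i) on rows and (j,a) ↦ (a,j) on columns. Hence every LiGO operator with the depth–width decomposition is a Monarch matrix. -/
open Matrix

theorem PEquiv.eq_toMatrix_toPEquiv_of_apply {m n α : Type*} [DecidableEq n] [Zero α] [One α]
    (e : m ≃ n) {P : Matrix m n α} (hP : ∀ p q, P p q = if q = e p then 1 else 0) :
    P = e.toPEquiv.toMatrix := by
  ext p q
  simp [hP, eq_comm]

theorem PEquiv.toMatrix_toPEquiv_mul_mul_transpose {l m n o α : Type*}
    [Fintype m] [DecidableEq m] [Fintype n] [DecidableEq n] [DecidableEq o] [NonAssocSemiring α]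
    (e₁ : l ≃ m) (e₂ : o ≃ n) (A : Matrix m n α) :
    -- without the ascriptions `*` elaborates through the `CStarMatrix` instance
    (e₁.toPEquiv.toMatrix : Matrix l m α) * A * (e₂.toPEquiv.toMatrix : Matrix o n α)ᵀ =
      A.submatrix e₁ e₂ := by
  rw [toMatrix_toPEquiv_mul, ← toMatrix_symm, ← Equiv.toPEquiv_symm, mul_toMatrix_toPEquiv,
    submatrix_submatrix, Equiv.symm_symm]
  rfl

theorem stmt_13_general (L1 L2 D1 D2 : ℕ)
    (ℓ : Fin L2 → Fin L1 → (Fin D2 × Fin D2) → ℝ)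
    (Ld : Matrix (Fin L2 × (Fin D2 × Fin D2)) (Fin L1 × (Fin D2 × Fin D2)) ℝ)
    (hLd : ∀ i a j b, Ld (i, a) (j, b) = if a = b then ℓ i j a else 0)
    (Rw : Matrix (Fin L1 × (Fin D2 × Fin D2)) (Fin L1 × (Fin D1 × Fin D1)) ℝ)
    (M : Matrix (Fin L2 × (Fin D2 × Fin D2)) (Fin L1 × (Fin D1 × Fin D1)) ℝ)
    (hM : M = Ld * Rw)
    (Lblk : Matrix ((Fin D2 × Fin D2) × Fin L2) ((Fin D2 × Fin D2) × Fin L1) ℝ)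
    (hLblk : ∀ a i b j, Lblk (a, i) (b, j) = if a = b then ℓ i j a else 0)
    (P1 : Matrix (Fin L2 × (Fin D2 × Fin D2)) ((Fin D2 × Fin D2) × Fin L2) ℝ)
    (hP1 : ∀ p q, P1 p q = if q = Prod.swap p then 1 else 0)
    (P2 : Matrix (Fin L1 × (Fin D2 × Fin D2)) ((Fin D2 × Fin D2) × Fin L1) ℝ)
    (hP2 : ∀ p q, P2 p q = if q = Prod.swap p then 1 else 0) :
    M = P1 * Lblk * P2ᵀ * Rw := by
  have hP1_perm : P1 = (Equiv.prodComm _ _).toPEquiv.toMatrix :=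
    PEquiv.eq_toMatrix_toPEquiv_of_apply _ hP1
  have hP2_perm : P2 = (Equiv.prodComm _ _).toPEquiv.toMatrix :=
    PEquiv.eq_toMatrix_toPEquiv_of_apply _ hP2
  have hLd_reindex : Ld = Lblk.submatrix (Equiv.prodComm _ _) (Equiv.prodComm _ _) := by
    ext ⟨i, a⟩ ⟨j, b⟩
    simp [hLd, hLblk]
  rw [hM, hP1_perm, hP2_perm, PEquiv.toMatrix_toPEquiv_mul_mul_transpose, hLd_reindex]

/-- Every LiGO operator with the depth–width decomposition admits a Monarch
factorization `M = P₁ · diag(L⁽ᵃ⁾) · P₂ᵀ · R_width`. -/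
theorem stmt_13 (L1 L2 D1 D2 : ℕ)
    (hL1 : 0 < L1) (hL2 : 0 < L2) (hD1 : 0 < D1) (hD2 : 0 < D2)
    (ℓ : Fin L2 → Fin L1 → (Fin D2 × Fin D2) → ℝ)
    (R : Fin L1 → Matrix (Fin D2 × Fin D2) (Fin D1 × Fin D1) ℝ)
    (Ld : Matrix (Fin L2 × (Fin D2 × Fin D2)) (Fin L1 × (Fin D2 × Fin D2)) ℝ)
    (hLd : ∀ i a j b, Ld (i, a) (j, b) = if a = b then ℓ i j a else 0)
    (Rw : Matrix (Fin L1 × (Fin D2 × Fin D2)) (Fin L1 × (Fin D1 × Fin D1)) ℝ)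
    (hRw : ∀ j a j' b, Rw (j, a) (j', b) = if j = j' then R j a b else 0)
    (M : Matrix (Fin L2 × (Fin D2 × Fin D2)) (Fin L1 × (Fin D1 × Fin D1)) ℝ)
    (hM : M = Ld * Rw)
    (Lblk : Matrix ((Fin D2 × Fin D2) × Fin L2) ((Fin D2 × Fin D2) × Fin L1) ℝ)
    (hLblk : ∀ a i b j, Lblk (a, i) (b, j) = if a = b then ℓ i j a else 0)
    (P1 : Matrix (Fin L2 × (Fin D2 × Fin D2)) ((Fin D2 × Fin D2) × Fin L2) ℝ)
    (hP1 : ∀ p q, P1 p q = if q = Prod.swap p then 1 else 0)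
    (P2 : Matrix (Fin L1 × (Fin D2 × Fin D2)) ((Fin D2 × Fin D2) × Fin L1) ℝ)
    (hP2 : ∀ p q, P2 p q = if q = Prod.swap p then 1 else 0) :
    M = P1 * Lblk * P2ᵀ * Rw :=
  stmt_13_general L1 L2 D1 D2 ℓ Ld hLd Rw M hM Lblk hLblk P1 hP1 P2 hP2
end
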